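/- arXiv:2207.10620 — 6 statements merged into one kernel-verified Lean document; each statement's English description precedes it below -/
import Mathlib

section
/- Let $\beta_1, \beta_2, \beta_3 \in \mathbb{C}$ be not collinear (not lying on a common affine real line). Then the family $\{(1,0)^T, (\beta_1, 1)^T, (\beta_2, 1)^T, (\beta_3, 1)^T\} \subseteq \mathbb{C}^2$ does phase retrieval: for all $z, w \in \mathbb{C}^2$, if $|\langle z, \varphi \rangle| = |\langle w, \varphi \rangle|$ for each $\varphi$ in the family, then $z = \tau w$ for some unimodular $\tau \in \mathbb{C}$. -/
open Complex

/-- `⟨v, w⟩ = v₁ conj w₁ + v₂ conj w₂` on `ℂ²`. -/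
noncomputable def innerC2 (v w : ℂ × ℂ) : ℂ :=
  v.1 * (starRingEnd ℂ) w.1 + v.2 * (starRingEnd ℂ) w.2

/-- A family of vectors `V ⊆ ℂ²` does phase retrieval. -/
def DoesPR2 (V : Set (ℂ × ℂ)) : Prop :=
  ∀ z w : ℂ × ℂ,
    (∀ φ ∈ V, ‖innerC2 z φ‖ = ‖innerC2 w φ‖) →
    ∃ τ : ℂ, ‖τ‖ = 1 ∧ z = τ • w

lemma line_collinear (a : ℂ) (ha : a ≠ 0) (r : ℝ) :
    Collinear ℝ {β : ℂ | ((starRingEnd ℂ) β * a).re = r} := by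
  rw [collinear_iff_exists_forall_eq_smul_vadd]
  refine ⟨(r / Complex.normSq a) • a, Complex.I * a, fun β hβ => ?_⟩
  refine ⟨(β.im * a.re - β.re * a.im) / Complex.normSq a, ?_⟩
  have h : β.re * a.re + β.im * a.im = r := by
    simpa [Complex.mul_re] using hβ
  have hna : a.re * a.re + a.im * a.im ≠ 0 := by
    simpa [Complex.normSq_apply] using (Complex.normSq_pos.mpr ha).ne'
  apply Complex.ext <;>
    simp only [vadd_eq_add, Complex.add_re, Complex.add_im, Complex.smul_re, Complex.smul_im,
      Complex.mul_re, Complex.mul_im, Complex.I_re, Complex.I_im, Complex.normSq_apply,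
      smul_eq_mul, zero_mul, one_mul, zero_sub, zero_add, neg_neg] <;>
    field_simp <;>
    rw [eq_div_iff (by simpa [sq] using hna)] <;>
    first
      | linear_combination (a.re * (a.re * a.re + a.im * a.im)) * h
      | linear_combination a.im * h
      | linear_combination a.re * h

lemma key_eq (β z₁ z₂ w₁ w₂ : ℂ) (e1 : Complex.normSq z₁ = Complex.normSq w₁)
    (h : Complex.normSq (z₁ * (starRingEnd ℂ) β + z₂)
        = Complex.normSq (w₁ * (starRingEnd ℂ) β + w₂)) :
    ((starRingEnd ℂ) β * (z₁ * (starRingEnd ℂ) z₂ - w₁ * (starRingEnd ℂ) w₂)).re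
      = (Complex.normSq w₂ - Complex.normSq z₂) / 2 := by
  simp only [Complex.normSq_apply, Complex.mul_re, Complex.mul_im, Complex.add_re,
    Complex.add_im, Complex.sub_re, Complex.sub_im, Complex.conj_re, Complex.conj_im] at h e1 ⊢
  nlinarith [h, e1, sq_nonneg β.re, sq_nonneg β.im]

theorem stmt_3 (β₁ β₂ β₃ : ℂ) (hcol : ¬ Collinear ℝ ({β₁, β₂, β₃} : Set ℂ)) :
    DoesPR2 {((1 : ℂ), (0 : ℂ)), (β₁, 1), (β₂, 1), (β₃, 1)} := by
  rintro ⟨z₁, z₂⟩ ⟨w₁, w₂⟩ h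
  have h0 := h (1, 0) (by simp)
  have h1 := h (β₁, 1) (by simp)
  have h2 := h (β₂, 1) (by simp)
  have h3 := h (β₃, 1) (by simp)
  simp only [innerC2, map_one, map_zero, mul_one, mul_zero, add_zero] at h0 h1 h2 h3
  have e1 : Complex.normSq z₁ = Complex.normSq w₁ := by
    rw [← Complex.sq_norm, ← Complex.sq_norm, h0]
  have k1 := key_eq β₁ z₁ z₂ w₁ w₂ e1 (by rw [← Complex.sq_norm, ← Complex.sq_norm, h1])
  have k2 := key_eq β₂ z₁ z₂ w₁ w₂ e1 (by rw [← Complex.sq_norm, ← Complex.sq_norm, h2])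
  have k3 := key_eq β₃ z₁ z₂ w₁ w₂ e1 (by rw [← Complex.sq_norm, ← Complex.sq_norm, h3])
  have e3 : z₁ * (starRingEnd ℂ) z₂ = w₁ * (starRingEnd ℂ) w₂ := by
    by_contra ha
    apply hcol
    have ha' : z₁ * (starRingEnd ℂ) z₂ - w₁ * (starRingEnd ℂ) w₂ ≠ 0 := sub_ne_zero.mpr ha
    refine (line_collinear _ ha' ((Complex.normSq w₂ - Complex.normSq z₂) / 2)).subset ?_
    rintro β (rfl | rfl | rfl) <;> assumption
  have e2 : Complex.normSq z₂ = Complex.normSq w₂ := by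
    rw [e3, sub_self, mul_zero, Complex.zero_re] at k1
    linarith
  by_cases hw2 : w₂ = 0
  · have hz2 : z₂ = 0 := by
      have : Complex.normSq z₂ = 0 := by rw [e2, hw2, map_zero]
      exact Complex.normSq_eq_zero.mp this
    by_cases hw1 : w₁ = 0
    · have hz1 : z₁ = 0 := by
        have : Complex.normSq z₁ = 0 := by rw [e1, hw1, map_zero]
        exact Complex.normSq_eq_zero.mp this
      exact ⟨1, by simp, by simp [hz1, hz2, hw1, hw2, Prod.ext_iff]⟩
    · refine ⟨z₁ / w₁, ?_, ?_⟩
      · rw [norm_div]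
        have habs : ‖z₁‖ = ‖w₁‖ := by
          rw [Complex.norm_def, Complex.norm_def, e1]
        rw [habs, div_self (by simpa using hw1)]
      · refine Prod.ext ?_ (by simp [hz2, hw2])
        simp only [Prod.smul_fst, smul_eq_mul]
        field_simp
  · have hz2 : z₂ ≠ 0 := by
      intro hz
      apply hw2
      have : Complex.normSq w₂ = 0 := by rw [← e2, hz, map_zero]
      exact Complex.normSq_eq_zero.mp this
    refine ⟨z₂ / w₂, ?_, ?_⟩
    · rw [norm_div]
      have habs : ‖z₂‖ = ‖w₂‖ := by
        rw [Complex.norm_def, Complex.norm_def, e2]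
      rw [habs, div_self (by simpa using hw2)]
    · have hcz2 : (starRingEnd ℂ) z₂ ≠ 0 := by simpa using hz2
      have key : z₁ * w₂ = w₁ * z₂ := by
        have hs : (starRingEnd ℂ) w₂ * w₂ = (starRingEnd ℂ) z₂ * z₂ := by
          have hzn : z₂ * (starRingEnd ℂ) z₂ = (Complex.normSq z₂ : ℂ) := Complex.mul_conj z₂
          have hwn : w₂ * (starRingEnd ℂ) w₂ = (Complex.normSq w₂ : ℂ) := Complex.mul_conj w₂
          rw [mul_comm _ w₂, mul_comm _ z₂, hzn, hwn, e2]
        have h1' : z₁ * w₂ * (starRingEnd ℂ) z₂ = w₁ * z₂ * (starRingEnd ℂ) z₂ := by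
          calc z₁ * w₂ * (starRingEnd ℂ) z₂ = z₁ * (starRingEnd ℂ) z₂ * w₂ := by ring
            _ = w₁ * (starRingEnd ℂ) w₂ * w₂ := by rw [e3]
            _ = w₁ * ((starRingEnd ℂ) w₂ * w₂) := by ring
            _ = w₁ * ((starRingEnd ℂ) z₂ * z₂) := by rw [hs]
            _ = w₁ * z₂ * (starRingEnd ℂ) z₂ := by ring
        exact mul_right_cancel₀ hcz2 h1'
      refine Prod.ext ?_ (by simp [smul_eq_mul, hw2, div_mul_cancel₀])
      simp only [Prod.smul_fst, smul_eq_mul]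
      field_simp
      linear_combination key
end

section
/- Let $\beta_1, \beta_2, \beta_3 \in \mathbb{C}$ be collinear (lying on a common affine real line). Then the family $\{(1,0)^T, (\beta_1, 1)^T, (\beta_2, 1)^T, (\beta_3, 1)^T\} \subseteq \mathbb{C}^2$ does NOT do phase retrieval: there exist $z, w \in \mathbb{C}^2$ with $|\langle z, \varphi \rangle| = |\langle w, \varphi \rangle|$ for each $\varphi$ in the family, but $z \neq \tau w$ for every unimodular $\tau$. -/
open Complex

theorem stmt_4 (β₁ β₂ β₃ : ℂ) (hcol : Collinear ℝ ({β₁, β₂, β₃} : Set ℂ)) :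
    ∃ z w : ℂ × ℂ,
      (∀ φ ∈ ({((1 : ℂ), (0 : ℂ)), (β₁, 1), (β₂, 1), (β₃, 1)} : Set (ℂ × ℂ)),
        ‖innerC2 z φ‖ = ‖innerC2 w φ‖) ∧
      ∀ τ : ℂ, ‖τ‖ = 1 → z ≠ τ • w := by
  have h1 : β₁ ∈ ({β₁, β₂, β₃} : Set ℂ) := by simp
  obtain ⟨v, hv⟩ := (collinear_iff_of_mem h1).mp hcol
  set d : ℂ := if v = 0 then 1 else v with hd
  have hd0 : d ≠ 0 := by by_cases h : v = 0 <;> simp [hd, h]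
  have key : ∀ β ∈ ({β₁, β₂, β₃} : Set ℂ), ∃ r : ℝ, β = r • d + β₁ := by
    intro β hβ
    obtain ⟨r, hr⟩ := hv β hβ
    by_cases h : v = 0
    · exact ⟨0, by simp [hr, h]⟩
    · exact ⟨r, by simp [hd, h, hr]⟩
  set z : ℂ × ℂ := (1, -((starRingEnd ℂ) β₁ + I * (starRingEnd ℂ) d)) with hz
  set w : ℂ × ℂ := (1, -((starRingEnd ℂ) β₁ - I * (starRingEnd ℂ) d)) with hw
  have main : ∀ β ∈ ({β₁, β₂, β₃} : Set ℂ),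
      ‖innerC2 z (β, 1)‖ = ‖innerC2 w (β, 1)‖ := by
    intro β hβ
    obtain ⟨r, hr⟩ := key β hβ
    have hrz : innerC2 z (β, 1) = ((r : ℂ) - I) * (starRingEnd ℂ) d := by
      simp only [innerC2, hz, hr]
      push_cast [Complex.real_smul]
      simp [map_mul]
      ring
    have hrw : innerC2 w (β, 1) = ((r : ℂ) + I) * (starRingEnd ℂ) d := by
      simp only [innerC2, hw, hr]
      push_cast [Complex.real_smul]
      simp [map_mul]
      ring
    have habs : ‖(r : ℂ) - I‖ = ‖(r : ℂ) + I‖ := by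
      have hc : (starRingEnd ℂ) ((r : ℂ) + I) = (r : ℂ) - I := by
        simp [map_add]
        ring
      rw [← hc, Complex.norm_conj]
    rw [hrz, hrw, norm_mul, norm_mul, habs]
  refine ⟨z, w, ?_, ?_⟩
  · intro φ hφ
    rcases hφ with h | h | h | h
    · subst h; simp [innerC2, hz, hw]
    · subst h; exact main β₁ (by simp)
    · subst h; exact main β₂ (by simp)
    · subst h; exact main β₃ (by simp)
  · intro τ hτ heq
    have h1' : (1 : ℂ) = τ * 1 := congrArg Prod.fst heq
    have hτ1 : τ = 1 := by simpa using h1'.symm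
    have h2 : z.2 = w.2 := by
      have := congrArg Prod.snd heq
      simpa [hτ1] using this
    have : I * (starRingEnd ℂ) d = -(I * (starRingEnd ℂ) d) := by
      have h2' := h2
      simp only [hz, hw] at h2'
      linear_combination -h2'
    have hI : I * (starRingEnd ℂ) d = 0 := by linear_combination this / 2
    have : (starRingEnd ℂ) d = 0 := by
      rcases mul_eq_zero.mp hI with h | h
      · exact absurd h I_ne_zero
      · exact h
    exact hd0 (by simpa using congrArg (starRingEnd ℂ) this)
end

section
/- Let $\varphi_0, \varphi_1, \varphi_2, \varphi_3 \in \mathbb{C}^2$ and define $\lambda_k = \langle \varphi_k, \varphi_0 \rangle$ and $\mu_k = \langle \varphi_k, J\overline{\varphi_0} \rangle$ for $k \in \{1,2,3\}$, where $J = \begin{pmatrix} 0 & -1 \\ 1 & 0 \end{pmatrix}$. Then $\{\varphi_0, \varphi_1, \varphi_2, \varphi_3\}$ does phase retrieval in $\mathbb{C}^2$ if and only if $\mu_k \neq 0$ for all $k \in \{1,2,3\}$ and the numbers $\lambda_1/\mu_1, \lambda_2/\mu_2, \lambda_3/\mu_3$ are not collinear. -/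
open Complex

noncomputable def Jb (u : ℂ × ℂ) : ℂ × ℂ := (-(starRingEnd ℂ) u.2, (starRingEnd ℂ) u.1)

noncomputable def det3 (c0 c1 c2 : ℂ) : ℝ :=
  (c1 - c0).re * (c2 - c0).im - (c1 - c0).im * (c2 - c0).re


lemma abs_eq_iff_normSq {a b : ℂ} : ‖a‖ = ‖b‖ ↔ normSq a = normSq b := by
  constructor
  · intro h; rw [← Complex.sq_norm, ← Complex.sq_norm, h]
  · intro h
    have := norm_nonneg a
    have := norm_nonneg b
    nlinarith [Complex.sq_norm a, Complex.sq_norm b]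

lemma key_identity (u z φ : ℂ × ℂ) :
    innerC2 u u * innerC2 z φ =
      (starRingEnd ℂ) (innerC2 φ u) * innerC2 z u
        + (starRingEnd ℂ) (innerC2 φ (Jb u)) * innerC2 z (Jb u) := by
  simp only [innerC2, Jb, map_add, map_mul, map_neg, Complex.conj_conj]
  ring

lemma coord1 (u z : ℂ × ℂ) :
    z.1 * innerC2 u u = innerC2 z u * u.1 - innerC2 z (Jb u) * (starRingEnd ℂ) u.2 := by
  simp only [innerC2, Jb, map_add, map_mul, map_neg, Complex.conj_conj]
  ring

lemma coord2 (u z : ℂ × ℂ) :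
    z.2 * innerC2 u u = innerC2 z u * u.2 + innerC2 z (Jb u) * (starRingEnd ℂ) u.1 := by
  simp only [innerC2, Jb, map_add, map_mul, map_neg, Complex.conj_conj]
  ring

lemma innerC2_self (u : ℂ × ℂ) : innerC2 u u = ((normSq u.1 + normSq u.2 : ℝ) : ℂ) := by
  simp [innerC2, mul_comm, Complex.mul_conj]

lemma innerC2_self_ne (u : ℂ × ℂ) (hu : u ≠ 0) : innerC2 u u ≠ 0 := by
  rw [innerC2_self]
  intro h
  norm_cast at h
  have h1 : normSq u.1 = 0 ∧ normSq u.2 = 0 := by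
    constructor <;> nlinarith [normSq_nonneg u.1, normSq_nonneg u.2]
  exact hu (Prod.ext (normSq_eq_zero.1 h1.1) (normSq_eq_zero.1 h1.2))

lemma collinear_iff_det3 (c0 c1 c2 : ℂ) :
    Collinear ℝ ({c0, c1, c2} : Set ℂ) ↔ det3 c0 c1 c2 = 0 := by
  constructor
  · intro h
    rw [collinear_iff_of_mem (Set.mem_insert c0 _)] at h
    obtain ⟨v, hv⟩ := h
    obtain ⟨r1, hr1⟩ := hv c1 (by simp)
    obtain ⟨r2, hr2⟩ := hv c2 (by simp)
    have h1 : c1 - c0 = r1 • v := by rw [hr1]; simp [vadd_eq_add]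
    have h2 : c2 - c0 = r2 • v := by rw [hr2]; simp [vadd_eq_add]
    simp only [det3, h1, h2, Complex.real_smul, Complex.mul_re, Complex.mul_im,
      Complex.ofReal_re, Complex.ofReal_im]
    ring
  · intro h
    rw [collinear_iff_of_mem (Set.mem_insert c0 _)]
    by_cases h1 : c1 = c0
    · refine ⟨c2 - c0, ?_⟩
      rintro p hp
      simp only [Set.mem_insert_iff, Set.mem_singleton_iff] at hp
      rcases hp with rfl | rfl | rfl
      · exact ⟨0, by simp⟩
      · exact ⟨0, by simp [h1]⟩
      · exact ⟨1, by simp [vadd_eq_add]⟩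
    · refine ⟨c1 - c0, ?_⟩
      rintro p hp
      simp only [Set.mem_insert_iff, Set.mem_singleton_iff] at hp
      have hne : (c1 - c0) ≠ 0 := sub_ne_zero.2 h1
      have hns : normSq (c1 - c0) ≠ 0 := by simpa [normSq_eq_zero] using hne
      rcases hp with rfl | rfl | rfl
      · exact ⟨0, by simp⟩
      · exact ⟨1, by simp [vadd_eq_add]⟩
      · refine ⟨((c1-c0).re * (p-c0).re + (c1-c0).im * (p-c0).im) / normSq (c1-c0), ?_⟩
        have hd : (c1 - c0).re * (p - c0).im - (c1 - c0).im * (p - c0).re = 0 := h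
        simp only [Complex.sub_re, Complex.sub_im] at hd
        have key : (p - c0) * (normSq (c1-c0) : ℂ) =
            (((c1-c0).re * (p-c0).re + (c1-c0).im * (p-c0).im : ℝ) : ℂ) * (c1 - c0) := by
          apply Complex.ext
          · simp only [Complex.mul_re, Complex.mul_im, Complex.ofReal_re, Complex.ofReal_im,
              Complex.normSq_apply, Complex.sub_re, Complex.sub_im]
            linear_combination (-(c1.im - c0.im)) * hd
          · simp only [Complex.mul_re, Complex.mul_im, Complex.ofReal_re, Complex.ofReal_im,
              Complex.normSq_apply, Complex.sub_re, Complex.sub_im]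
            linear_combination (c1.re - c0.re) * hd
        have hNC : ((normSq (c1-c0) : ℝ) : ℂ) ≠ 0 := by exact_mod_cast hns
        have h2 : p - c0 = (((((c1-c0).re * (p-c0).re + (c1-c0).im * (p-c0).im) / normSq (c1-c0) : ℝ)) : ℂ) * (c1 - c0) := by
          rw [Complex.ofReal_div, div_mul_eq_mul_div, eq_div_iff hNC]
          linear_combination key
        simp only [vadd_eq_add, Complex.real_smul]
        linear_combination h2

lemma normSq_expand (c x y : ℂ) :
    normSq ((starRingEnd ℂ) c * x + y) =
      normSq c * normSq x + normSq y
        + 2 * (c.re * (x.re * y.re + x.im * y.im) + c.im * (x.im * y.re - x.re * y.im)) := by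
  simp only [normSq_apply, Complex.add_re, Complex.add_im, Complex.mul_re, Complex.mul_im,
    Complex.conj_re, Complex.conj_im]
  ring

lemma bwd_core (c0 c1 c2 a b a' b' : ℂ)
    (hD : det3 c0 c1 c2 ≠ 0)
    (ha : normSq a = normSq a')
    (h0 : normSq ((starRingEnd ℂ) c0 * a + b) = normSq ((starRingEnd ℂ) c0 * a' + b'))
    (h1 : normSq ((starRingEnd ℂ) c1 * a + b) = normSq ((starRingEnd ℂ) c1 * a' + b'))
    (h2 : normSq ((starRingEnd ℂ) c2 * a + b) = normSq ((starRingEnd ℂ) c2 * a' + b')) :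
    normSq b = normSq b' ∧ a * (starRingEnd ℂ) b = a' * (starRingEnd ℂ) b' := by
  rw [normSq_expand, normSq_expand] at h0 h1 h2
  have hD' : (c1.re - c0.re) * (c2.im - c0.im) - (c1.im - c0.im) * (c2.re - c0.re) ≠ 0 := by
    simpa [det3, Complex.sub_re, Complex.sub_im] using hD
  set Dre : ℝ := a.re*b.re + a.im*b.im - (a'.re*b'.re + a'.im*b'.im) with hDreDef
  set Dim : ℝ := a.im*b.re - a.re*b.im - (a'.im*b'.re - a'.re*b'.im) with hDimDef
  have E0 : normSq b - normSq b' + 2*(c0.re*Dre + c0.im*Dim) = 0 := by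
    rw [hDreDef, hDimDef]; linear_combination h0 - normSq c0 * ha
  have E1 : normSq b - normSq b' + 2*(c1.re*Dre + c1.im*Dim) = 0 := by
    rw [hDreDef, hDimDef]; linear_combination h1 - normSq c1 * ha
  have E2 : normSq b - normSq b' + 2*(c2.re*Dre + c2.im*Dim) = 0 := by
    rw [hDreDef, hDimDef]; linear_combination h2 - normSq c2 * ha
  have F1 : (c1.re - c0.re)*Dre + (c1.im - c0.im)*Dim = 0 := by linear_combination (E1 - E0)/2
  have F2 : (c2.re - c0.re)*Dre + (c2.im - c0.im)*Dim = 0 := by linear_combination (E2 - E0)/2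
  have hDre : Dre = 0 := by
    have h : Dre * ((c1.re - c0.re) * (c2.im - c0.im) - (c1.im - c0.im) * (c2.re - c0.re)) = 0 := by
      linear_combination (c2.im - c0.im) * F1 - (c1.im - c0.im) * F2
    exact (mul_eq_zero.1 h).resolve_right hD'
  have hDim : Dim = 0 := by
    have h : Dim * ((c1.re - c0.re) * (c2.im - c0.im) - (c1.im - c0.im) * (c2.re - c0.re)) = 0 := by
      linear_combination (c1.re - c0.re) * F2 - (c2.re - c0.re) * F1
    exact (mul_eq_zero.1 h).resolve_right hD'
  constructor
  · linear_combination E0 - 2*c0.re*hDre - 2*c0.im*hDim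
  · apply Complex.ext
    · simp only [Complex.mul_re, Complex.conj_re, Complex.conj_im]
      linear_combination hDre
    · simp only [Complex.mul_im, Complex.conj_re, Complex.conj_im]
      linear_combination hDim


lemma eq_phase (u z w : ℂ × ℂ) (hn : innerC2 u u ≠ 0) (τ : ℂ)
    (h1 : innerC2 z u = τ * innerC2 w u) (h2 : innerC2 z (Jb u) = τ * innerC2 w (Jb u)) :
    z = τ • w := by
  have e1 : z.1 = τ * w.1 := by
    have := coord1 u z
    have hw := coord1 u w
    apply mul_right_cancel₀ hn
    rw [this]
    linear_combination -τ * hw + u.1 * h1 - (starRingEnd ℂ) u.2 * h2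
  have e2 : z.2 = τ * w.2 := by
    have := coord2 u z
    have hw := coord2 u w
    apply mul_right_cancel₀ hn
    rw [this]
    linear_combination -τ * hw + u.2 * h1 + (starRingEnd ℂ) u.1 * h2
  exact Prod.ext (by simpa using e1) (by simpa using e2)

lemma BWD (u f1 f2 f3 : ℂ × ℂ)
    (hm1 : innerC2 f1 (Jb u) ≠ 0) (hm2 : innerC2 f2 (Jb u) ≠ 0) (hm3 : innerC2 f3 (Jb u) ≠ 0)
    (hD : det3 (innerC2 f1 u / innerC2 f1 (Jb u)) (innerC2 f2 u / innerC2 f2 (Jb u))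
        (innerC2 f3 u / innerC2 f3 (Jb u)) ≠ 0) :
    DoesPR2 {u, f1, f2, f3} := by
  have hu : u ≠ 0 := by
    rintro rfl
    exact hm1 (by simp [innerC2, Jb])
  have hn : innerC2 u u ≠ 0 := innerC2_self_ne u hu
  intro z w hmeas
  set a := innerC2 z u with hadef
  set b := innerC2 z (Jb u) with hbdef
  set a' := innerC2 w u with ha'def
  set b' := innerC2 w (Jb u) with hb'def
  have ha : normSq a = normSq a' := by
    have := hmeas u (by simp)
    rwa [abs_eq_iff_normSq] at this
  have hk : ∀ f : ℂ × ℂ, f ∈ ({u, f1, f2, f3} : Set (ℂ × ℂ)) → innerC2 f (Jb u) ≠ 0 →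
      normSq ((starRingEnd ℂ) (innerC2 f u / innerC2 f (Jb u)) * a + b)
        = normSq ((starRingEnd ℂ) (innerC2 f u / innerC2 f (Jb u)) * a' + b') := by
    intro f hf hmf
    have hmeq := hmeas f hf
    rw [abs_eq_iff_normSq] at hmeq
    have hz := key_identity u z f
    have hw := key_identity u w f
    have hstep : normSq ((starRingEnd ℂ) (innerC2 f u) * a + (starRingEnd ℂ) (innerC2 f (Jb u)) * b)
        = normSq ((starRingEnd ℂ) (innerC2 f u) * a' + (starRingEnd ℂ) (innerC2 f (Jb u)) * b') := by
      rw [← hz, ← hw, normSq_mul, normSq_mul, hmeq]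
    have hmc : (starRingEnd ℂ) (innerC2 f (Jb u)) ≠ 0 := by
      simpa using hmf
    have hcancel : (starRingEnd ℂ) (innerC2 f (Jb u)) * ((starRingEnd ℂ) (innerC2 f u) / (starRingEnd ℂ) (innerC2 f (Jb u))) = (starRingEnd ℂ) (innerC2 f u) := by
      rw [mul_div_assoc']
      exact mul_div_cancel_left₀ _ hmc
    have hfac : (starRingEnd ℂ) (innerC2 f u) * a + (starRingEnd ℂ) (innerC2 f (Jb u)) * b
        = (starRingEnd ℂ) (innerC2 f (Jb u)) * ((starRingEnd ℂ) (innerC2 f u / innerC2 f (Jb u)) * a + b) := by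
      rw [map_div₀]
      linear_combination (-a) * hcancel
    have hfac' : (starRingEnd ℂ) (innerC2 f u) * a' + (starRingEnd ℂ) (innerC2 f (Jb u)) * b'
        = (starRingEnd ℂ) (innerC2 f (Jb u)) * ((starRingEnd ℂ) (innerC2 f u / innerC2 f (Jb u)) * a' + b') := by
      rw [map_div₀]
      linear_combination (-a') * hcancel
    rw [hfac, hfac', normSq_mul, normSq_mul] at hstep
    have hns : normSq ((starRingEnd ℂ) (innerC2 f (Jb u))) ≠ 0 := by
      simpa [normSq_eq_zero] using hmc
    exact mul_left_cancel₀ hns hstep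
  obtain ⟨hb, hd⟩ := bwd_core _ _ _ a b a' b' hD ha
    (hk f1 (by simp) hm1) (hk f2 (by simp) hm2) (hk f3 (by simp) hm3)
  -- now produce τ
  by_cases ha0 : a' = 0
  · have haz : a = 0 := by
      rw [ha0] at ha; simpa [normSq_eq_zero] using ha
    by_cases hb0 : b' = 0
    · have hbz : b = 0 := by
        rw [hb0] at hb; simpa [normSq_eq_zero] using hb
      exact ⟨1, by simp, eq_phase u z w hn 1 (by show a = 1 * a'; rw [haz, ha0]; ring)
        (by show b = 1 * b'; rw [hbz, hb0]; ring)⟩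
    · refine ⟨b / b', ?_, eq_phase u z w hn _ ?_ ?_⟩
      · rw [norm_div]
        rw [abs_eq_iff_normSq.2 hb]
        exact div_self ((norm_ne_zero_iff).2 hb0)
      · show a = b / b' * a'; rw [haz, ha0]; ring
      · show b = b / b' * b'; field_simp
  · refine ⟨a / a', ?_, eq_phase u z w hn _ ?_ ?_⟩
    · rw [norm_div, abs_eq_iff_normSq.2 ha]
      exact div_self ((norm_ne_zero_iff).2 ha0)
    · show a = a / a' * a'; field_simp
    · show b = a / a' * b'
      rw [div_mul_eq_mul_div, eq_div_iff ha0]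
      have hconj : (starRingEnd ℂ) (a * (starRingEnd ℂ) b) = (starRingEnd ℂ) (a' * (starRingEnd ℂ) b') := by
        rw [hd]
      rw [map_mul, map_mul, Complex.conj_conj, Complex.conj_conj] at hconj
      have hna : a * (starRingEnd ℂ) a = a' * (starRingEnd ℂ) a' := by
        rw [Complex.mul_conj, Complex.mul_conj]; exact_mod_cast ha
      have hA : (starRingEnd ℂ) a' ≠ 0 := by simpa using ha0
      have hz : (starRingEnd ℂ) a' * (b * a' - a * b') = 0 := by
        linear_combination a * hconj - b * hna
      have := (mul_eq_zero.1 hz).resolve_left hA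
      linear_combination this

noncomputable def Zv (u : ℂ × ℂ) (a b : ℂ) : ℂ × ℂ :=
  (a * u.1 - b * (starRingEnd ℂ) u.2, a * u.2 + b * (starRingEnd ℂ) u.1)

lemma Z_inner (u : ℂ × ℂ) (a b : ℂ) (f : ℂ × ℂ) :
    innerC2 (Zv u a b) f =
      (starRingEnd ℂ) (innerC2 f u) * a + (starRingEnd ℂ) (innerC2 f (Jb u)) * b := by
  simp only [innerC2, Zv, Jb, map_add, map_mul, map_neg, Complex.conj_conj]
  ring

lemma inner_u_Jb (u : ℂ × ℂ) : innerC2 u (Jb u) = 0 := by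
  simp only [innerC2, Jb, map_neg, Complex.conj_conj]; ring

lemma inner_Jb_u (u : ℂ × ℂ) : innerC2 (Jb u) u = 0 := by
  simp only [innerC2, Jb]; ring

lemma inner_Jb_Jb (u : ℂ × ℂ) : innerC2 (Jb u) (Jb u) = innerC2 u u := by
  simp only [innerC2, Jb, map_neg, Complex.conj_conj]; ring

lemma conj_inner_self (u : ℂ × ℂ) : (starRingEnd ℂ) (innerC2 u u) = innerC2 u u := by
  simp only [innerC2, map_add, map_mul, Complex.conj_conj]; ring

lemma smul_inner (τ : ℂ) (w f : ℂ × ℂ) : innerC2 (τ • w) f = τ * innerC2 w f := by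
  simp only [innerC2, Prod.smul_fst, Prod.smul_snd, smul_eq_mul]; ring

lemma not_PR_of (u f1 f2 f3 : ℂ × ℂ) (hn : innerC2 u u ≠ 0) (b b' : ℂ) (hbb : b ≠ b')
    (hE : ∀ f ∈ ({f1, f2, f3} : Set (ℂ × ℂ)),
      normSq ((starRingEnd ℂ) (innerC2 f u) + (starRingEnd ℂ) (innerC2 f (Jb u)) * b)
        = normSq ((starRingEnd ℂ) (innerC2 f u) + (starRingEnd ℂ) (innerC2 f (Jb u)) * b')) :
    ¬ DoesPR2 {u, f1, f2, f3} := by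
  intro hPR
  have hmeas : ∀ f ∈ ({u, f1, f2, f3} : Set (ℂ × ℂ)),
      ‖innerC2 (Zv u 1 b) f‖ = ‖innerC2 (Zv u 1 b') f‖ := by
    intro f hf
    rcases hf with rfl | hf
    · rw [abs_eq_iff_normSq]
      have hA : innerC2 (Zv f 1 b) f = innerC2 f f := by
        rw [Z_inner, inner_u_Jb, conj_inner_self]; simp
      have hA' : innerC2 (Zv f 1 b') f = innerC2 f f := by
        rw [Z_inner, inner_u_Jb, conj_inner_self]; simp
      rw [hA, hA']
    · rw [abs_eq_iff_normSq, Z_inner, Z_inner, mul_one]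
      exact hE f hf
  obtain ⟨τ, hτ, heq⟩ := hPR (Zv u 1 b) (Zv u 1 b') hmeas
  · have hA : innerC2 (Zv u 1 b) u = innerC2 u u := by
      rw [Z_inner, inner_u_Jb, conj_inner_self]; simp
    have hA' : innerC2 (Zv u 1 b') u = innerC2 u u := by
      rw [Z_inner, inner_u_Jb, conj_inner_self]; simp
    have hB : innerC2 (Zv u 1 b) (Jb u) = innerC2 u u * b := by
      rw [Z_inner, inner_Jb_u, inner_Jb_Jb, conj_inner_self]; simp
    have hB' : innerC2 (Zv u 1 b') (Jb u) = innerC2 u u * b' := by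
      rw [Z_inner, inner_Jb_u, inner_Jb_Jb, conj_inner_self]; simp
    have hτ1 : τ = 1 := by
      have h1 : innerC2 (Zv u 1 b) u = τ * innerC2 (Zv u 1 b') u := by
        rw [heq, smul_inner]
      rw [hA, hA'] at h1
      have := mul_left_cancel₀ hn (by linear_combination h1 : innerC2 u u * 1 = innerC2 u u * τ)
      exact this.symm
    have h2 : innerC2 (Zv u 1 b) (Jb u) = τ * innerC2 (Zv u 1 b') (Jb u) := by
      rw [heq, smul_inner]
    rw [hB, hB', hτ1, one_mul] at h2
    exact hbb (mul_left_cancel₀ hn h2)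

-- existence of b,b' for the "some mu = 0" case
lemma exists_bb (l2 m2 l3 m3 : ℂ) :
    ∃ b b' : ℂ, b ≠ b' ∧
      normSq ((starRingEnd ℂ) l2 + (starRingEnd ℂ) m2 * b)
        = normSq ((starRingEnd ℂ) l2 + (starRingEnd ℂ) m2 * b') ∧
      normSq ((starRingEnd ℂ) l3 + (starRingEnd ℂ) m3 * b)
        = normSq ((starRingEnd ℂ) l3 + (starRingEnd ℂ) m3 * b') := by
  have P_of : ∀ l m b b' : ℂ,
      normSq (b + (starRingEnd ℂ) l / (starRingEnd ℂ) m)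
        = normSq (b' + (starRingEnd ℂ) l / (starRingEnd ℂ) m) →
      normSq ((starRingEnd ℂ) l + (starRingEnd ℂ) m * b)
        = normSq ((starRingEnd ℂ) l + (starRingEnd ℂ) m * b') := by
    intro l m b b' h
    by_cases hm : (starRingEnd ℂ) m = 0
    · rw [hm]; ring_nf
    · have hfac : ∀ x : ℂ, (starRingEnd ℂ) l + (starRingEnd ℂ) m * x
          = (starRingEnd ℂ) m * (x + (starRingEnd ℂ) l / (starRingEnd ℂ) m) := by
        intro x
        field_simp
        ring
      rw [hfac b, hfac b', normSq_mul, normSq_mul, h]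
  by_cases hm2 : (starRingEnd ℂ) m2 = 0
  · by_cases hm3 : (starRingEnd ℂ) m3 = 0
    · exact ⟨0, 1, by norm_num, by rw [hm2]; ring_nf, by rw [hm3]; ring_nf⟩
    · set p := -((starRingEnd ℂ) l3 / (starRingEnd ℂ) m3) with hp
      refine ⟨p + 1, p - 1, by intro h; exact absurd (by linear_combination h : (2:ℂ) = 0) (by norm_num),
        by rw [hm2]; ring_nf, P_of _ _ _ _ ?_⟩
      have e1 : p + 1 + (starRingEnd ℂ) l3 / (starRingEnd ℂ) m3 = 1 := by rw [hp]; ring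
      have e2 : p - 1 + (starRingEnd ℂ) l3 / (starRingEnd ℂ) m3 = -1 := by rw [hp]; ring
      rw [e1, e2]
      simp [normSq_apply]
  · by_cases hm3 : (starRingEnd ℂ) m3 = 0
    · set p := -((starRingEnd ℂ) l2 / (starRingEnd ℂ) m2) with hp
      refine ⟨p + 1, p - 1, by intro h; exact absurd (by linear_combination h : (2:ℂ) = 0) (by norm_num),
        P_of _ _ _ _ ?_, by rw [hm3]; ring_nf⟩
      have e1 : p + 1 + (starRingEnd ℂ) l2 / (starRingEnd ℂ) m2 = 1 := by rw [hp]; ring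
      have e2 : p - 1 + (starRingEnd ℂ) l2 / (starRingEnd ℂ) m2 = -1 := by rw [hp]; ring
      rw [e1, e2]
      simp [normSq_apply]
    · set p2 := -((starRingEnd ℂ) l2 / (starRingEnd ℂ) m2) with hp2
      set p3 := -((starRingEnd ℂ) l3 / (starRingEnd ℂ) m3) with hp3
      by_cases hq : p3 - p2 = 0
      · have hpp : p3 = p2 := by linear_combination hq
        refine ⟨p2 + 1, p2 - 1, by intro h; exact absurd (by linear_combination h : (2:ℂ) = 0) (by norm_num),
          P_of _ _ _ _ ?_, P_of _ _ _ _ ?_⟩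
        · have e1 : p2 + 1 + (starRingEnd ℂ) l2 / (starRingEnd ℂ) m2 = 1 := by rw [hp2]; ring
          have e2 : p2 - 1 + (starRingEnd ℂ) l2 / (starRingEnd ℂ) m2 = -1 := by rw [hp2]; ring
          rw [e1, e2]; simp [normSq_apply]
        · have e1 : p2 + 1 + (starRingEnd ℂ) l3 / (starRingEnd ℂ) m3 = 1 := by
            rw [show (starRingEnd ℂ) l3 / (starRingEnd ℂ) m3 = -p3 by rw [hp3]; ring, hpp]; ring
          have e2 : p2 - 1 + (starRingEnd ℂ) l3 / (starRingEnd ℂ) m3 = -1 := by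
            rw [show (starRingEnd ℂ) l3 / (starRingEnd ℂ) m3 = -p3 by rw [hp3]; ring, hpp]; ring
          rw [e1, e2]; simp [normSq_apply]
      · set q := p3 - p2 with hqdef
        refine ⟨(p2 + p3)/2 + Complex.I * q, (p2 + p3)/2 - Complex.I * q, ?_,
          P_of _ _ _ _ ?_, P_of _ _ _ _ ?_⟩
        · intro h
          have h2 : (2 * Complex.I) * q = 0 := by linear_combination h
          rcases mul_eq_zero.1 h2 with h3 | h3
          · simp [Complex.ext_iff] at h3
          · exact hq h3
        · have e1 : (p2 + p3)/2 + Complex.I * q + (starRingEnd ℂ) l2 / (starRingEnd ℂ) m2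
              = q * (1/2 + Complex.I) := by
            rw [show (starRingEnd ℂ) l2 / (starRingEnd ℂ) m2 = -p2 by rw [hp2]; ring, hqdef]; ring
          have e2 : (p2 + p3)/2 - Complex.I * q + (starRingEnd ℂ) l2 / (starRingEnd ℂ) m2
              = q * (1/2 - Complex.I) := by
            rw [show (starRingEnd ℂ) l2 / (starRingEnd ℂ) m2 = -p2 by rw [hp2]; ring, hqdef]; ring
          rw [e1, e2, normSq_mul, normSq_mul]
          congr 1
          simp [normSq_apply]
        · have e1 : (p2 + p3)/2 + Complex.I * q + (starRingEnd ℂ) l3 / (starRingEnd ℂ) m3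
              = q * (-(1/2) + Complex.I) := by
            rw [show (starRingEnd ℂ) l3 / (starRingEnd ℂ) m3 = -p3 by rw [hp3]; ring, hqdef]; ring
          have e2 : (p2 + p3)/2 - Complex.I * q + (starRingEnd ℂ) l3 / (starRingEnd ℂ) m3
              = q * (-(1/2) - Complex.I) := by
            rw [show (starRingEnd ℂ) l3 / (starRingEnd ℂ) m3 = -p3 by rw [hp3]; ring, hqdef]; ring
          rw [e1, e2, normSq_mul, normSq_mul]
          congr 1
          simp [normSq_apply]

lemma FWD_mu (u f1 f2 f3 : ℂ × ℂ) (hn : innerC2 u u ≠ 0)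
    (hm1 : innerC2 f1 (Jb u) = 0) : ¬ DoesPR2 {u, f1, f2, f3} := by
  obtain ⟨b, b', hbb, h2, h3⟩ := exists_bb (innerC2 f2 u) (innerC2 f2 (Jb u))
    (innerC2 f3 u) (innerC2 f3 (Jb u))
  apply not_PR_of u f1 f2 f3 hn b b' hbb
  intro f hf
  rcases hf with rfl | rfl | rfl
  · rw [hm1]; simp
  · exact h2
  · exact h3

lemma fac_lemma (l m x : ℂ) (hm : m ≠ 0) :
    normSq ((starRingEnd ℂ) l + (starRingEnd ℂ) m * x)
      = normSq m * normSq ((starRingEnd ℂ) (l / m) + x) := by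
  have hmc : (starRingEnd ℂ) m ≠ 0 := by simpa using hm
  have key : (starRingEnd ℂ) l + (starRingEnd ℂ) m * x
      = (starRingEnd ℂ) m * ((starRingEnd ℂ) (l / m) + x) := by
    rw [map_div₀]
    have hcancel : (starRingEnd ℂ) m * ((starRingEnd ℂ) l / (starRingEnd ℂ) m) = (starRingEnd ℂ) l := by
      rw [mul_div_assoc']
      exact mul_div_cancel_left₀ _ hmc
    linear_combination -hcancel
  rw [key, normSq_mul, normSq_conj]

lemma Qlem (c1 c d : ℂ) (t : ℝ) (b b' : ℂ)
    (htb : b = (t : ℂ) * (starRingEnd ℂ) d) (hb' : b' = b - (starRingEnd ℂ) d)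
    (hts : (2 * t - 1) * normSq d = -2 * (c1.re * d.re + c1.im * d.im))
    (hR : (c.re - c1.re) * d.re + (c.im - c1.im) * d.im = 0) :
    normSq ((starRingEnd ℂ) c + b) = normSq ((starRingEnd ℂ) c + b') := by
  subst hb' htb
  simp only [Complex.normSq_apply] at hts ⊢
  simp only [Complex.add_re, Complex.add_im, Complex.sub_re, Complex.sub_im, Complex.mul_re,
    Complex.mul_im, Complex.ofReal_re, Complex.ofReal_im, Complex.conj_re, Complex.conj_im]
  linear_combination hts + 2 * hR

lemma FWD_col (u f1 f2 f3 : ℂ × ℂ) (hn : innerC2 u u ≠ 0)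
    (hm1 : innerC2 f1 (Jb u) ≠ 0) (hm2 : innerC2 f2 (Jb u) ≠ 0) (hm3 : innerC2 f3 (Jb u) ≠ 0)
    (hcol : det3 (innerC2 f1 u / innerC2 f1 (Jb u)) (innerC2 f2 u / innerC2 f2 (Jb u))
      (innerC2 f3 u / innerC2 f3 (Jb u)) = 0) : ¬ DoesPR2 {u, f1, f2, f3} := by
  set c1 := innerC2 f1 u / innerC2 f1 (Jb u) with hc1
  set c2 := innerC2 f2 u / innerC2 f2 (Jb u) with hc2
  set c3 := innerC2 f3 u / innerC2 f3 (Jb u) with hc3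
  have hcol' : (c2.re - c1.re) * (c3.im - c1.im) - (c2.im - c1.im) * (c3.re - c1.re) = 0 := by
    simpa [det3, Complex.sub_re, Complex.sub_im] using hcol
  obtain ⟨d, hd0, hR2, hR3⟩ : ∃ d : ℂ, d ≠ 0 ∧
      (c2.re - c1.re) * d.re + (c2.im - c1.im) * d.im = 0 ∧
      (c3.re - c1.re) * d.re + (c3.im - c1.im) * d.im = 0 := by
    by_cases h2 : c2 - c1 = 0
    · by_cases h3 : c3 - c1 = 0
      · refine ⟨1, one_ne_zero, ?_, ?_⟩
        · have : c2 = c1 := by linear_combination h2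
          rw [this]; ring
        · have : c3 = c1 := by linear_combination h3
          rw [this]; ring
      · refine ⟨Complex.I * (c3 - c1), mul_ne_zero Complex.I_ne_zero h3, ?_, ?_⟩
        · have : c2 = c1 := by linear_combination h2
          rw [this]; ring
        · simp only [Complex.mul_re, Complex.mul_im, Complex.I_re, Complex.I_im,
            Complex.sub_re, Complex.sub_im]
          ring
    · refine ⟨Complex.I * (c2 - c1), mul_ne_zero Complex.I_ne_zero h2, ?_, ?_⟩
      · simp only [Complex.mul_re, Complex.mul_im, Complex.I_re, Complex.I_im,
          Complex.sub_re, Complex.sub_im]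
        ring
      · simp only [Complex.mul_re, Complex.mul_im, Complex.I_re, Complex.I_im,
          Complex.sub_re, Complex.sub_im]
        linear_combination hcol'
  have hdns : normSq d ≠ 0 := by simpa [normSq_eq_zero] using hd0
  set t : ℝ := (-2 * (c1.re * d.re + c1.im * d.im)) / (2 * normSq d) + 1/2 with ht
  set b : ℂ := (t : ℂ) * (starRingEnd ℂ) d with hb
  set b' : ℂ := b - (starRingEnd ℂ) d with hb'
  have hts : (2 * t - 1) * normSq d = -2 * (c1.re * d.re + c1.im * d.im) := by
    rw [ht]
    field_simp
    ring
  have hbb : b ≠ b' := by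
    rw [hb']
    intro h
    have : (starRingEnd ℂ) d = 0 := by linear_combination h
    exact hd0 (by simpa using this)
  apply not_PR_of u f1 f2 f3 hn b b' hbb
  intro f hf
  rcases hf with rfl | rfl | rfl
  · rw [fac_lemma _ _ _ hm1, fac_lemma _ _ _ hm1, ← hc1]
    exact congrArg _ (Qlem c1 c1 d t b b' hb hb' hts (by ring))
  · rw [fac_lemma _ _ _ hm2, fac_lemma _ _ _ hm2, ← hc2]
    exact congrArg _ (Qlem c1 c2 d t b b' hb hb' hts hR2)
  · rw [fac_lemma _ _ _ hm3, fac_lemma _ _ _ hm3, ← hc3]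
    exact congrArg _ (Qlem c1 c3 d t b b' hb hb' hts hR3)

lemma FWD_mu_any (u f1 f2 f3 : ℂ × ℂ) (hm1 : innerC2 f1 (Jb u) = 0) :
    ¬ DoesPR2 {u, f1, f2, f3} := by
  by_cases hu : u = 0
  · subst hu
    intro hPR
    by_cases hf1 : f1 = 0
    · have hψ : ((1:ℂ),(0:ℂ)) ≠ (0 : ℂ × ℂ) := by simp [Prod.ext_iff]
      have hm : innerC2 f1 (Jb ((1:ℂ),(0:ℂ))) = 0 := by simp [hf1, innerC2]
      apply FWD_mu ((1:ℂ),(0:ℂ)) f1 f2 f3 (innerC2_self_ne _ hψ) hm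
      intro z w h
      apply hPR z w
      intro φ hφ
      rcases hφ with rfl | hφ
      · simp [innerC2]
      · exact h φ (Set.mem_insert_iff.2 (Or.inr hφ))
    · apply FWD_mu f1 f1 f2 f3 (innerC2_self_ne _ hf1) (inner_u_Jb f1)
      intro z w h
      apply hPR z w
      intro φ hφ
      rcases hφ with rfl | hφ
      · simp [innerC2]
      · exact h φ (Set.mem_insert_iff.2 (Or.inr hφ))
  · exact FWD_mu u f1 f2 f3 (innerC2_self_ne u hu) hm1

theorem stmt_5 (φ₀ φ₁ φ₂ φ₃ : ℂ × ℂ)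
    (lam : Fin 3 → ℂ) (mu : Fin 3 → ℂ)
    (hlam : ∀ k : Fin 3, lam k = innerC2 (![φ₁, φ₂, φ₃] k) φ₀)
    (hmu : ∀ k : Fin 3, mu k =
      innerC2 (![φ₁, φ₂, φ₃] k)
        (-(starRingEnd ℂ) φ₀.2, (starRingEnd ℂ) φ₀.1)) :
    DoesPR2 {φ₀, φ₁, φ₂, φ₃} ↔
      ((∀ k : Fin 3, mu k ≠ 0) ∧
        ¬ Collinear ℝ ({lam 0 / mu 0, lam 1 / mu 1, lam 2 / mu 2} : Set ℂ)) := by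
  have hl1 : lam 0 = innerC2 φ₁ φ₀ := by simpa using hlam 0
  have hl2 : lam 1 = innerC2 φ₂ φ₀ := by simpa using hlam 1
  have hl3 : lam 2 = innerC2 φ₃ φ₀ := by simpa using hlam 2
  have hm1 : mu 0 = innerC2 φ₁ (Jb φ₀) := by simp only [Jb]; simpa using hmu 0
  have hm2 : mu 1 = innerC2 φ₂ (Jb φ₀) := by simp only [Jb]; simpa using hmu 1
  have hm3 : mu 2 = innerC2 φ₃ (Jb φ₀) := by simp only [Jb]; simpa using hmu 2
  have hperm2 : ({φ₀, φ₁, φ₂, φ₃} : Set (ℂ × ℂ)) = {φ₀, φ₂, φ₁, φ₃} := by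
    ext x; simp only [Set.mem_insert_iff, Set.mem_singleton_iff]; tauto
  have hperm3 : ({φ₀, φ₁, φ₂, φ₃} : Set (ℂ × ℂ)) = {φ₀, φ₃, φ₁, φ₂} := by
    ext x; simp only [Set.mem_insert_iff, Set.mem_singleton_iff]; tauto
  constructor
  · intro hPR
    have hA0 : mu 0 ≠ 0 := by
      intro hk; rw [hm1] at hk
      exact FWD_mu_any φ₀ φ₁ φ₂ φ₃ hk hPR
    have hA1 : mu 1 ≠ 0 := by
      intro hk; rw [hm2] at hk
      rw [hperm2] at hPR
      exact FWD_mu_any φ₀ φ₂ φ₁ φ₃ hk hPR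
    have hA2 : mu 2 ≠ 0 := by
      intro hk; rw [hm3] at hk
      rw [hperm3] at hPR
      exact FWD_mu_any φ₀ φ₃ φ₁ φ₂ hk hPR
    have hA : ∀ k : Fin 3, mu k ≠ 0 := by
      intro k
      fin_cases k
      · exact hA0
      · exact hA1
      · exact hA2
    refine ⟨hA, ?_⟩
    intro hcol
    rw [hl1, hl2, hl3, hm1, hm2, hm3, collinear_iff_det3] at hcol
    have hu : φ₀ ≠ 0 := by
      intro h
      apply hA0
      rw [hm1, h]
      simp [innerC2, Jb]
    exact FWD_col φ₀ φ₁ φ₂ φ₃ (innerC2_self_ne _ hu)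
      (by rw [← hm1]; exact hA0) (by rw [← hm2]; exact hA1) (by rw [← hm3]; exact hA2)
      hcol hPR
  · rintro ⟨hA, hcol⟩
    rw [hl1, hl2, hl3, hm1, hm2, hm3, collinear_iff_det3] at hcol
    exact BWD φ₀ φ₁ φ₂ φ₃ (by rw [← hm1]; exact hA 0) (by rw [← hm2]; exact hA 1)
      (by rw [← hm3]; exact hA 2) hcol
end

section
/- No family of three vectors $\{\varphi_1, \varphi_2, \varphi_3\} \subseteq \mathbb{C}^2$ does phase retrieval: for any $\varphi_1, \varphi_2, \varphi_3 \in \mathbb{C}^2$ there exist $z, w \in \mathbb{C}^2$ with $|\langle z, \varphi_k \rangle| = |\langle w, \varphi_k \rangle|$ for $k = 1,2,3$ such that $z \neq \tau w$ for every unimodular $\tau \in \mathbb{C}$. -/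
open Complex

lemma innerC2_add (x y φ : ℂ × ℂ) : innerC2 (x + y) φ = innerC2 x φ + innerC2 y φ := by
  simp [innerC2]; ring

lemma innerC2_sub (x y φ : ℂ × ℂ) : innerC2 (x - y) φ = innerC2 x φ - innerC2 y φ := by
  simp [innerC2]; ring

lemma innerC2_smul (μ : ℂ) (x φ : ℂ × ℂ) : innerC2 (μ • x) φ = μ * innerC2 x φ := by
  simp [innerC2, Prod.smul_fst, Prod.smul_snd, smul_eq_mul]; ring

lemma innerC2_rsmul (r : ℝ) (x φ : ℂ × ℂ) : innerC2 (r • x) φ = (r : ℂ) * innerC2 x φ := by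
  simp [innerC2, Prod.smul_fst, Prod.smul_snd, Complex.real_smul]; ring

lemma abs_add_eq_abs_sub {α β : ℂ} (h : (α * (starRingEnd ℂ) β).re = 0) :
    ‖α + β‖ = ‖α - β‖ := by
  rw [Complex.norm_def, Complex.norm_def]
  congr 1
  simp only [Complex.normSq_apply, Complex.add_re, Complex.add_im, Complex.sub_re,
    Complex.sub_im, Complex.mul_re, Complex.conj_re, Complex.conj_im] at h ⊢
  nlinarith [h]

noncomputable def gmap (c : ℂ) (u : ℂ × ℂ) : (ℂ × ℂ) →ₗ[ℝ] ℝ where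
  toFun b := (c * (starRingEnd ℂ) (innerC2 b u)).re
  map_add' x y := by
    rw [innerC2_add, map_add, mul_add, Complex.add_re]
  map_smul' r x := by
    simp only [RingHom.id_apply, smul_eq_mul]
    rw [innerC2_rsmul, map_mul, Complex.conj_ofReal,
      show c * ((r : ℂ) * (starRingEnd ℂ) (innerC2 x u)) = (r:ℂ) * (c * (starRingEnd ℂ) (innerC2 x u)) from by ring,
      Complex.re_ofReal_mul]

lemma exists_good_b (a u v : ℂ × ℂ) (hu : innerC2 a u ≠ 0) :
    ∃ b : ℂ × ℂ, (innerC2 a u * (starRingEnd ℂ) (innerC2 b u)).re = 0 ∧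
      (innerC2 a v * (starRingEnd ℂ) (innerC2 b v)).re = 0 ∧ ∀ μ : ℂ, b ≠ μ • a := by
  by_contra hcon
  push_neg at hcon
  have ha : a ≠ 0 := fun h => hu (by simp [h, innerC2])
  have hIa : I • a ≠ 0 := by
    simpa [smul_eq_zero, Complex.I_ne_zero] using ha
  set g := (gmap (innerC2 a u) u).prod (gmap (innerC2 a v) v) with hg
  have hker : LinearMap.ker g ≤ Submodule.span ℝ {I • a} := by
    intro b hb
    rw [LinearMap.mem_ker, hg, LinearMap.prod_apply, Prod.mk_eq_zero] at hb
    have h1 : (innerC2 a u * (starRingEnd ℂ) (innerC2 b u)).re = 0 := hb.1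
    have h2 : (innerC2 a v * (starRingEnd ℂ) (innerC2 b v)).re = 0 := hb.2
    obtain ⟨μ, rfl⟩ := hcon b h1 h2
    have hre : μ.re = 0 := by
      rw [innerC2_smul, map_mul,
        show innerC2 a u * ((starRingEnd ℂ) μ * (starRingEnd ℂ) (innerC2 a u)) =
          (starRingEnd ℂ) μ * (innerC2 a u * (starRingEnd ℂ) (innerC2 a u)) from by ring,
        Complex.mul_conj] at h1
      simp only [Complex.mul_re, Complex.conj_re, Complex.conj_im, Complex.ofReal_re,
        Complex.ofReal_im, mul_zero, neg_mul, sub_zero, neg_zero] at h1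
      have hn : Complex.normSq (innerC2 a u) ≠ 0 := by
        simpa using Complex.normSq_pos.mpr hu |>.ne'
      have := mul_eq_zero.mp h1
      tauto
    have hμ : μ = (μ.im : ℂ) * I := by
      apply Complex.ext <;> simp [hre]
    rw [hμ, mul_smul]
    rw [Submodule.mem_span_singleton]
    exact ⟨μ.im, (algebraMap_smul ℂ μ.im (I • a)).symm ▸ rfl⟩
  have hle1 : Module.finrank ℝ (LinearMap.ker g) ≤ 1 := by
    calc Module.finrank ℝ (LinearMap.ker g) ≤ Module.finrank ℝ (Submodule.span ℝ {I • a}) :=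
          Submodule.finrank_mono hker
      _ = 1 := finrank_span_singleton hIa
  have hrn := LinearMap.finrank_range_add_finrank_ker g
  have hr2 : Module.finrank ℝ (LinearMap.range g) ≤ 2 := by
    have := Submodule.finrank_le (LinearMap.range g)
    simpa [Module.finrank_prod] using this
  have h4 : Module.finrank ℝ (ℂ × ℂ) = 4 := by
    simp [Module.finrank_prod, Complex.finrank_real_complex]
  omega

theorem stmt_6 (φ₁ φ₂ φ₃ : ℂ × ℂ) :
    ∃ z w : ℂ × ℂ,
      (∀ φ ∈ ({φ₁, φ₂, φ₃} : Set (ℂ × ℂ)),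
        ‖innerC2 z φ‖ = ‖innerC2 w φ‖) ∧
      ∀ τ : ℂ, ‖τ‖ = 1 → z ≠ τ • w := by
  obtain ⟨a, ha, ha3⟩ : ∃ a : ℂ × ℂ, a ≠ 0 ∧ innerC2 a φ₃ = 0 := by
    by_cases h : φ₃ = 0
    · exact ⟨(1, 0), by simp [Prod.ext_iff], by simp [innerC2, h]⟩
    · refine ⟨(-(starRingEnd ℂ) φ₃.2, (starRingEnd ℂ) φ₃.1), ?_, by simp [innerC2]; ring⟩
      intro hz
      apply h
      rw [Prod.ext_iff] at hz ⊢
      simp only [Prod.fst_zero, Prod.snd_zero, neg_eq_zero, map_eq_zero] at hz ⊢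
      exact ⟨hz.2, hz.1⟩
  obtain ⟨b, hb1, hb2, hb3, hbne⟩ : ∃ b : ℂ × ℂ,
      (innerC2 a φ₁ * (starRingEnd ℂ) (innerC2 b φ₁)).re = 0 ∧
      (innerC2 a φ₂ * (starRingEnd ℂ) (innerC2 b φ₂)).re = 0 ∧
      (innerC2 a φ₃ * (starRingEnd ℂ) (innerC2 b φ₃)).re = 0 ∧
      ∀ μ : ℂ, b ≠ μ • a := by
    by_cases h1 : innerC2 a φ₁ = 0
    · by_cases h2 : innerC2 a φ₂ = 0
      · have ha' : a.1 ≠ 0 ∨ a.2 ≠ 0 := by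
          by_contra hc
          push_neg at hc
          exact ha (Prod.ext hc.1 hc.2)
        rcases ha' with hA | hA
        · refine ⟨(0, a.1), by simp [h1], by simp [h2], by simp [ha3], ?_⟩
          intro μ hμ
          rw [Prod.ext_iff, Prod.smul_fst, Prod.smul_snd, smul_eq_mul, smul_eq_mul] at hμ
          have : μ = 0 := by
            rcases mul_eq_zero.mp hμ.1.symm with h | h
            · exact h
            · exact absurd h hA
          rw [this, zero_mul] at hμ
          exact hA (show a.1 = 0 by simpa using hμ.2)
        · refine ⟨(a.2, 0), by simp [h1], by simp [h2], by simp [ha3], ?_⟩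
          intro μ hμ
          rw [Prod.ext_iff, Prod.smul_fst, Prod.smul_snd, smul_eq_mul, smul_eq_mul] at hμ
          have : μ = 0 := by
            rcases mul_eq_zero.mp hμ.2.symm with h | h
            · exact h
            · exact absurd h hA
          rw [this, zero_mul] at hμ
          exact hA (show a.2 = 0 by simpa using hμ.1)
      · obtain ⟨b, hb2, hb1, hbne⟩ := exists_good_b a φ₂ φ₁ h2
        exact ⟨b, hb1, hb2, by simp [ha3], hbne⟩
    · obtain ⟨b, hb1, hb2, hbne⟩ := exists_good_b a φ₁ φ₂ h1
      exact ⟨b, hb1, hb2, by simp [ha3], hbne⟩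
  refine ⟨a + b, a - b, ?_, ?_⟩
  · intro φ hφ
    rw [innerC2_add, innerC2_sub]
    rcases hφ with h | h | h
    · rw [h]; exact abs_add_eq_abs_sub hb1
    · rw [h]; exact abs_add_eq_abs_sub hb2
    · rw [h]; exact abs_add_eq_abs_sub hb3
  · intro τ _ h
    by_cases hτ : τ = -1
    · subst hτ
      rw [neg_one_smul, neg_sub] at h
      have h2a : a + a = 0 := by
        have := congrArg (fun x => x + a - b) h
        simpa [add_comm, add_assoc, add_left_comm, sub_eq_add_neg] using this
      have : (2 : ℂ) • a = 0 := by rw [two_smul]; exact_mod_cast h2a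
      exact ha (by simpa using (smul_eq_zero.mp this).resolve_left two_ne_zero)
    · have hτ' : (1 : ℂ) + τ ≠ 0 := fun h0 => hτ (by linear_combination h0)
      have key : (1 + τ) • b = (τ - 1) • a := by
        have h' := h
        rw [smul_sub] at h'
        linear_combination (norm := module) h'
      have hb' : b = ((1 + τ)⁻¹ * (τ - 1)) • a := by
        have := congrArg (fun x => (1 + τ)⁻¹ • x) key
        simpa [smul_smul, inv_mul_cancel₀ hτ'] using this
      exact hbne _ hb'
end

section
/- Let $F, H$ be entire functions and $Z \subseteq \mathbb{C}$ such that $|F(z)| = |H(z)|$ and $\overline{F(z)}F'(z) = \overline{H(z)}H'(z)$ for all $z \in Z$, and such that each of the entire functions $F$, $H$, and $FH(FH' - F'H)$ vanishes identically whenever it vanishes on $Z$. Then there is $\tau \in \mathbb{C}$ with $|\tau| = 1$ and $H = \tau F$. -/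
open Complex

theorem stmt_15 (F H : ℂ → ℂ)
    (hF : Differentiable ℂ F) (hH : Differentiable ℂ H)
    (Z : Set ℂ)
    (habs : ∀ z ∈ Z, ‖F z‖ = ‖H z‖)
    (hderiv : ∀ z ∈ Z, (starRingEnd ℂ) (F z) * deriv F z =
      (starRingEnd ℂ) (H z) * deriv H z)
    (huniqF : (∀ z ∈ Z, F z = 0) → ∀ z : ℂ, F z = 0)
    (huniqH : (∀ z ∈ Z, H z = 0) → ∀ z : ℂ, H z = 0)
    (huniqG : (∀ z ∈ Z, F z * H z * (F z * deriv H z - deriv F z * H z) = 0) →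
      ∀ z : ℂ, F z * H z * (F z * deriv H z - deriv F z * H z) = 0) :
    ∃ τ : ℂ, ‖τ‖ = 1 ∧ ∀ z : ℂ, H z = τ * F z := by
  -- Step 1: G vanishes on Z
  have step1 : ∀ z ∈ Z, F z * H z * (F z * deriv H z - deriv F z * H z) = 0 := by
    intro z hz
    have h1 : (starRingEnd ℂ) (F z) * F z = (starRingEnd ℂ) (H z) * H z := by
      have := habs z hz
      have h2 : Complex.normSq (F z) = Complex.normSq (H z) := by
        rw [← Complex.sq_norm, ← Complex.sq_norm, this]
      calc (starRingEnd ℂ) (F z) * F z = (Complex.normSq (F z) : ℂ) := by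
            rw [mul_comm, Complex.mul_conj]
        _ = (Complex.normSq (H z) : ℂ) := by rw [h2]
        _ = (starRingEnd ℂ) (H z) * H z := by rw [mul_comm, Complex.mul_conj]
    have h2 := hderiv z hz
    have key : (starRingEnd ℂ) (F z) * (starRingEnd ℂ) (H z) *
        (F z * deriv H z - deriv F z * H z) = 0 := by
      have expand : (starRingEnd ℂ) (F z) * (starRingEnd ℂ) (H z) *
          (F z * deriv H z - deriv F z * H z) =
          ((starRingEnd ℂ) (F z) * F z) * ((starRingEnd ℂ) (H z) * deriv H z) -
          ((starRingEnd ℂ) (H z) * H z) * ((starRingEnd ℂ) (F z) * deriv F z) := by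
        ring
      rw [expand, h1, h2]; ring
    rcases mul_eq_zero.1 key with h | h
    · rcases mul_eq_zero.1 h with h | h
      · have : F z = 0 := by simpa using h
        rw [this]; ring
      · have : H z = 0 := by simpa using h
        rw [this]; ring
    · rw [h]; ring
  have hG := huniqG step1
  -- Case: F vanishes on Z
  by_cases hFZ : ∀ z ∈ Z, F z = 0
  · have hF0 := huniqF hFZ
    have hHZ : ∀ z ∈ Z, H z = 0 := by
      intro z hz
      have : ‖H z‖ = 0 := by rw [← habs z hz, hFZ z hz, norm_zero]
      exact norm_eq_zero.1 this
    have hH0 := huniqH hHZ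
    exact ⟨1, by simp, fun z => by rw [hH0 z, hF0 z, mul_zero]⟩
  · push_neg at hFZ
    obtain ⟨z₀, hz₀Z, hFz₀⟩ := hFZ
    have hHz₀ : H z₀ ≠ 0 := by
      intro h
      apply hFz₀
      have := habs z₀ hz₀Z
      rw [h, norm_zero] at this
      exact norm_eq_zero.1 this
    set τ : ℂ := H z₀ / F z₀ with hτ
    have hτabs : ‖τ‖ = 1 := by
      rw [hτ, norm_div, ← habs z₀ hz₀Z, div_self]
      simpa using hFz₀
    set K : ℂ → ℂ := fun z => H z - τ * F z with hKdef
    have hK : Differentiable ℂ K := hH.sub (hF.const_mul τ)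
    have hKz₀ : K z₀ = 0 := by
      simp only [hKdef, hτ]
      field_simp
      ring
    have hKderiv : ∀ z, deriv K z = deriv H z - τ * deriv F z := by
      intro z
      simp only [hKdef]
      rw [deriv_fun_sub (hH.differentiableAt) ((hF.const_mul τ).differentiableAt),
        deriv_const_mul τ hF.differentiableAt]
    -- open set where F and H don't vanish
    set U : Set ℂ := {z | F z ≠ 0 ∧ H z ≠ 0} with hUdef
    have hUopen : IsOpen U := by
      have : U = (F ⁻¹' {0})ᶜ ∩ (H ⁻¹' {0})ᶜ := by
        ext z; simp [hUdef]
      rw [this]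
      exact (hF.continuous.isOpen_preimage _ isOpen_compl_singleton).inter
        (hH.continuous.isOpen_preimage _ isOpen_compl_singleton)
    have hz₀U : z₀ ∈ U := ⟨hFz₀, hHz₀⟩
    obtain ⟨r, hr, hball⟩ := Metric.isOpen_iff.1 hUopen z₀ hz₀U
    set B := Metric.ball z₀ r with hB
    -- on U, the Wronskian vanishes
    have hW : ∀ z ∈ U, F z * deriv H z - deriv F z * H z = 0 := by
      intro z hz
      have := hG z
      rcases mul_eq_zero.1 this with h | h
      · rcases mul_eq_zero.1 h with h | h
        · exact absurd h hz.1
        · exact absurd h hz.2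
      · exact h
    -- K/F is constant (= 0) on the ball
    set g : ℂ → ℂ := fun z => K z / F z with hg
    have hgdiff : DifferentiableOn ℂ g B := by
      apply DifferentiableOn.div hK.differentiableOn hF.differentiableOn
      intro x hx; exact (hball hx).1
    have hgderiv : ∀ x ∈ B, deriv g x = 0 := by
      intro x hx
      have hFx : F x ≠ 0 := (hball hx).1
      have hWx := hW x (hball hx)
      rw [hg, deriv_fun_div hK.differentiableAt hF.differentiableAt hFx]
      have hnum : deriv K x * F x - K x * deriv F x = 0 := by
        rw [hKderiv x]
        simp only [hKdef]
        linear_combination hWx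
      rw [hnum, zero_div]
    have hgconst : ∀ x ∈ B, g x = g z₀ := by
      intro x hx
      have hz₀B : z₀ ∈ B := Metric.mem_ball_self hr
      apply (convex_ball z₀ r).is_const_of_fderivWithin_eq_zero hgdiff _ hx hz₀B
      intro y hy
      rw [fderivWithin_of_isOpen Metric.isOpen_ball hy]
      ext
      simp [← toSpanSingleton_deriv, hgderiv y hy]
    have hgz₀ : g z₀ = 0 := by rw [hg]; simp [hKz₀]
    have hKB : ∀ x ∈ B, K x = 0 := by
      intro x hx
      have hFx : F x ≠ 0 := (hball hx).1
      have := hgconst x hx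
      rw [hgz₀, hg] at this
      exact (div_eq_zero_iff.1 this).resolve_right hFx
    -- identity principle
    have hKanalytic : AnalyticOnNhd ℂ K Set.univ :=
      hK.differentiableOn.analyticOnNhd isOpen_univ
    have hKev : K =ᶠ[nhds z₀] 0 := by
      filter_upwards [Metric.ball_mem_nhds z₀ hr] with x hx
      exact hKB x hx
    have hK0 : ∀ z, K z = 0 := by
      intro z
      have := hKanalytic.eqOn_zero_of_preconnected_of_eventuallyEq_zero
        isPreconnected_univ (Set.mem_univ z₀) hKev (Set.mem_univ z)
      simpa using this
    refine ⟨τ, hτabs, fun z => ?_⟩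
    have := hK0 z
    simp only [hKdef] at this
    exact sub_eq_zero.1 this
end

section
/- Let $\lambda_1, \lambda_2, \lambda_3 \in \mathbb{C}$ be not collinear. Then the family $\mathcal{P} = \{(1,0)^T, (\lambda_1, 1)^T, (\lambda_2, 1)^T, (\lambda_3, 1)^T\} \subseteq \mathbb{C}^2$ does phase retrieval, and moreover no proper subfamily of $\mathcal{P}$ (of three or fewer vectors) does phase retrieval. -/
open Complex

open ComplexConjugate

private lemma abs_eq_mul_conj {x y : ℂ} (h : ‖x‖ = ‖y‖) :
    x * conj x = y * conj y := by
  rw [Complex.mul_conj, Complex.mul_conj]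
  norm_cast
  rw [← Complex.sq_norm, ← Complex.sq_norm, h]

private lemma abs_eq_of_mul_conj {x y : ℂ} (h : x * conj x = y * conj y) :
    ‖x‖ = ‖y‖ := by
  rw [Complex.mul_conj, Complex.mul_conj] at h
  have : Complex.normSq x = Complex.normSq y := by exact_mod_cast h
  rw [Complex.norm_def, Complex.norm_def, this]

private lemma distinct_of_not_collinear {a b c : ℂ}
    (h : ¬ Collinear ℝ ({a, b, c} : Set ℂ)) : a ≠ b ∧ a ≠ c ∧ b ≠ c := by
  refine ⟨?_, ?_, ?_⟩ <;> rintro rfl <;> apply h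
  · exact Collinear.subset (by intro x hx; simp at hx ⊢; tauto) (collinear_pair ℝ a c)
  · exact Collinear.subset (by intro x hx; simp at hx ⊢; tauto) (collinear_pair ℝ a b)
  · exact Collinear.subset (by intro x hx; simp at hx ⊢; tauto) (collinear_pair ℝ a b)

private lemma pr_main (l₁ l₂ l₃ : ℂ) (hcol : ¬ Collinear ℝ ({l₁, l₂, l₃} : Set ℂ)) :
    DoesPR2 {((1 : ℂ), (0 : ℂ)), (l₁, 1), (l₂, 1), (l₃, 1)} := by
  rintro ⟨z₁, z₂⟩ ⟨w₁, w₂⟩ h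
  have h0 : z₁ * conj z₁ = w₁ * conj w₁ := by
    have h0' := h (1, 0) (by simp)
    simp only [innerC2, map_one, map_zero, mul_one, mul_zero, add_zero] at h0'
    exact abs_eq_mul_conj h0'
  have E : ∀ l : ℂ,
      ‖innerC2 (z₁, z₂) (l, 1)‖ = ‖innerC2 (w₁, w₂) (l, 1)‖ →
      (z₁ * conj z₂ - w₁ * conj w₂) * conj l + (conj z₁ * z₂ - conj w₁ * w₂) * l
        + (z₂ * conj z₂ - w₂ * conj w₂) = 0 := by
    intro l hl
    have h1 := abs_eq_mul_conj hl
    simp only [innerC2, map_one, mul_one, map_add, map_mul, Complex.conj_conj] at h1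
    linear_combination h1 - l * conj l * h0
  have E1 := E l₁ (h (l₁, 1) (by simp))
  have E2 := E l₂ (h (l₂, 1) (by simp))
  have E3 := E l₃ (h (l₃, 1) (by simp))
  by_cases hu : z₁ * conj z₂ = w₁ * conj w₂
  · -- phase equality case
    have huc : conj z₁ * z₂ = conj w₁ * w₂ := by
      have := congrArg (starRingEnd ℂ) hu
      simpa [map_mul] using this
    have hd : z₂ * conj z₂ = w₂ * conj w₂ := by
      linear_combination E1 - conj l₁ * hu - l₁ * huc
    by_cases hw1 : w₁ = 0
    · have hz1 : z₁ = 0 := by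
        have h1 : z₁ * conj z₁ = 0 := by rw [h0, hw1]; ring
        rcases mul_eq_zero.mp h1 with h2 | h2
        · exact h2
        · simpa using congrArg (starRingEnd ℂ) h2
      by_cases hw2 : w₂ = 0
      · have hz2 : z₂ = 0 := by
          have h1 : z₂ * conj z₂ = 0 := by rw [hd, hw2]; ring
          rcases mul_eq_zero.mp h1 with h2 | h2
          · exact h2
          · simpa using congrArg (starRingEnd ℂ) h2
        exact ⟨1, by simp, by simp [Prod.ext_iff, hz1, hz2, hw1, hw2]⟩
      · refine ⟨z₂ / w₂, ?_, ?_⟩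
        · rw [norm_div, abs_eq_of_mul_conj hd, div_self (norm_ne_zero_iff.mpr hw2)]
        · simp only [Prod.ext_iff, Prod.smul_fst, Prod.smul_snd, smul_eq_mul]
          constructor
          · rw [hz1, hw1]; ring
          · field_simp
    · have hz1 : z₁ ≠ 0 := by
        intro h1
        apply hw1
        have h2 : w₁ * conj w₁ = 0 := by rw [← h0, h1]; ring
        rcases mul_eq_zero.mp h2 with h3 | h3
        · exact h3
        · simpa using congrArg (starRingEnd ℂ) h3
      refine ⟨z₁ / w₁, ?_, ?_⟩
      · rw [norm_div, abs_eq_of_mul_conj h0, div_self (norm_ne_zero_iff.mpr hw1)]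
      · have hw1c : conj w₁ ≠ 0 := by
          intro h1; apply hw1; simpa using congrArg (starRingEnd ℂ) h1
        have key : w₁ * z₂ = z₁ * w₂ := by
          apply mul_left_cancel₀ hw1c
          linear_combination z₁ * huc - z₂ * h0
        simp only [Prod.ext_iff, Prod.smul_fst, Prod.smul_snd, smul_eq_mul]
        constructor
        · field_simp
        · field_simp
          linear_combination key
  · -- collinearity contradiction
    exfalso
    apply hcol
    have hUne : z₁ * conj z₂ - w₁ * conj w₂ ≠ 0 := sub_ne_zero.mpr hu
    have hcu : conj z₁ * z₂ - conj w₁ * w₂ ≠ 0 := by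
      intro h1
      apply hUne
      have := congrArg (starRingEnd ℂ) h1
      simpa [map_sub, map_mul] using this
    rw [collinear_iff_of_mem (Set.mem_insert l₁ _)]
    refine ⟨Complex.I / (conj z₁ * z₂ - conj w₁ * w₂), ?_⟩
    have step : ∀ p : ℂ,
        (z₁ * conj z₂ - w₁ * conj w₂) * conj p + (conj z₁ * z₂ - conj w₁ * w₂) * p
          + (z₂ * conj z₂ - w₂ * conj w₂) = 0 →
        ∃ r : ℝ, p = r • (Complex.I / (conj z₁ * z₂ - conj w₁ * w₂)) + l₁ := by
      intro p hp
      have hXsum : (conj z₁ * z₂ - conj w₁ * w₂) * (p - l₁)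
          + conj ((conj z₁ * z₂ - conj w₁ * w₂) * (p - l₁)) = 0 := by
        simp only [map_mul, map_sub, Complex.conj_conj]
        linear_combination hp - E1
      have hre : ((conj z₁ * z₂ - conj w₁ * w₂) * (p - l₁)).re = 0 := by
        have h2 : ((2 * ((conj z₁ * z₂ - conj w₁ * w₂) * (p - l₁)).re : ℝ) : ℂ) = 0 :=
          (Complex.add_conj _).symm.trans hXsum
        have h3 := Complex.ofReal_eq_zero.mp h2
        linarith
      refine ⟨((conj z₁ * z₂ - conj w₁ * w₂) * (p - l₁)).im, ?_⟩
      have hXval : (conj z₁ * z₂ - conj w₁ * w₂) * (p - l₁)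
          = (((conj z₁ * z₂ - conj w₁ * w₂) * (p - l₁)).im : ℂ) * Complex.I := by
        refine Complex.ext ?_ ?_ <;> simp [hre]
      have h5 : (((conj z₁ * z₂ - conj w₁ * w₂) * (p - l₁)).im : ℂ) * Complex.I
          / (conj z₁ * z₂ - conj w₁ * w₂) = p - l₁ := by
        rw [div_eq_iff hcu]
        linear_combination -hXval
      rw [Complex.real_smul, ← mul_div_assoc, h5]
      ring
    intro p hp
    rcases hp with rfl | rfl | rfl
    · exact ⟨0, by simp⟩
    · exact step _ E2
    · exact step _ E3

private lemma not_pr_three (a b c : ℂ) (hcol : ¬ Collinear ℝ ({a, b, c} : Set ℂ))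
    (S : Set (ℂ × ℂ)) (hS : S ⊆ {(a, (1 : ℂ)), (b, 1), (c, 1)}) : ¬ DoesPR2 S := by
  intro hPR
  have hAI : AffineIndependent ℝ ![a, b, c] := affineIndependent_iff_not_collinear_set.mpr hcol
  set T : Affine.Simplex ℝ ℂ 2 := ⟨![a, b, c], hAI⟩ with hT
  have hmeas : ∀ φ ∈ S, ‖innerC2 (1, -conj T.circumcenter) φ‖
      = ‖innerC2 (0, (T.circumradius : ℂ)) φ‖ := by
    intro φ hφ
    have hφ' := hS hφ
    simp only [Set.mem_insert_iff, Set.mem_singleton_iff] at hφ'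
    have habs : ∀ x : ℂ, dist x T.circumcenter = T.circumradius →
        ‖innerC2 (1, -conj T.circumcenter) (x, 1)‖ =
        ‖innerC2 (0, (T.circumradius : ℂ)) (x, 1)‖ := by
      intro x hx
      have h1 : innerC2 (1, -conj T.circumcenter) (x, 1) = conj (x - T.circumcenter) := by
        simp only [innerC2, map_one, map_sub, mul_one, one_mul]
        ring
      have h2 : innerC2 (0, (T.circumradius : ℂ)) (x, 1) = (T.circumradius : ℂ) := by
        simp [innerC2]
      rw [h1, h2, Complex.norm_conj, Complex.norm_real, ← Complex.dist_eq, hx,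
        Real.norm_of_nonneg T.circumradius_nonneg]
    have hda : dist a T.circumcenter = T.circumradius := by
      have := T.dist_circumcenter_eq_circumradius 0
      simpa [hT] using this
    have hdb : dist b T.circumcenter = T.circumradius := by
      have := T.dist_circumcenter_eq_circumradius 1
      simpa [hT] using this
    have hdc : dist c T.circumcenter = T.circumradius := by
      have := T.dist_circumcenter_eq_circumradius 2
      simpa [hT] using this
    rcases hφ' with rfl | rfl | rfl
    · exact habs a hda
    · exact habs b hdb
    · exact habs c hdc
  obtain ⟨τ, hτ, heq⟩ := hPR (1, -conj T.circumcenter) (0, (T.circumradius : ℂ)) hmeas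
  have h1 : (1 : ℂ) = τ • (0 : ℂ) := congrArg Prod.fst heq
  simp at h1

private lemma not_pr_pair (a b : ℂ) (hab : a ≠ b) (S : Set (ℂ × ℂ))
    (hS : S ⊆ {((1 : ℂ), (0 : ℂ)), (a, 1), (b, 1)}) : ¬ DoesPR2 S := by
  intro hPR
  have hc0 : conj b - conj a ≠ 0 := by
    intro h1
    apply hab
    have h2 : conj b = conj a := by linear_combination h1
    have := congrArg (starRingEnd ℂ) h2
    simpa using this.symm
  have hmeas : ∀ φ ∈ S, ‖innerC2 (1, -conj a + Complex.I * (conj b - conj a)) φ‖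
      = ‖innerC2 (1, -conj a - Complex.I * (conj b - conj a)) φ‖ := by
    intro φ hφ
    have hφ' := hS hφ
    simp only [Set.mem_insert_iff, Set.mem_singleton_iff] at hφ'
    rcases hφ' with rfl | rfl | rfl
    · simp [innerC2]
    · have h1 : innerC2 (1, -conj a + Complex.I * (conj b - conj a)) (a, 1)
          = Complex.I * (conj b - conj a) := by
        simp only [innerC2, map_one, mul_one, one_mul]; ring
      have h2 : innerC2 (1, -conj a - Complex.I * (conj b - conj a)) (a, 1)
          = -(Complex.I * (conj b - conj a)) := by
        simp only [innerC2, map_one, mul_one, one_mul]; ring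
      rw [h1, h2, norm_neg]
    · have h1 : innerC2 (1, -conj a + Complex.I * (conj b - conj a)) (b, 1)
          = (1 + Complex.I) * (conj b - conj a) := by
        simp only [innerC2, map_one, mul_one, one_mul]; ring
      have h2 : innerC2 (1, -conj a - Complex.I * (conj b - conj a)) (b, 1)
          = (1 - Complex.I) * (conj b - conj a) := by
        simp only [innerC2, map_one, mul_one, one_mul]; ring
      rw [h1, h2, norm_mul, norm_mul]
      congr 1
      simp [Complex.norm_def, Complex.normSq_apply]
  obtain ⟨τ, hτ, heq⟩ := hPR (1, -conj a + Complex.I * (conj b - conj a))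
      (1, -conj a - Complex.I * (conj b - conj a)) hmeas
  have h1 : (1 : ℂ) = τ • (1 : ℂ) := congrArg Prod.fst heq
  have h2 : -conj a + Complex.I * (conj b - conj a)
        = τ • (-conj a - Complex.I * (conj b - conj a)) := congrArg Prod.snd heq
  simp only [smul_eq_mul, mul_one] at h1 h2
  rw [← h1, one_mul] at h2
  have hc' : Complex.I * (conj b - conj a) = 0 := by linear_combination h2 / 2
  rcases mul_eq_zero.mp hc' with h3 | h3
  · exact Complex.I_ne_zero h3
  · exact hc0 h3

theorem stmt_19 (l₁ l₂ l₃ : ℂ) (hcol : ¬ Collinear ℝ ({l₁, l₂, l₃} : Set ℂ)) :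
    let P : Set (ℂ × ℂ) := {((1 : ℂ), (0 : ℂ)), (l₁, 1), (l₂, 1), (l₃, 1)}
    DoesPR2 P ∧ ∀ S : Set (ℂ × ℂ), S ⊂ P → ¬ DoesPR2 S := by
  intro P
  obtain ⟨h12, h13, h23⟩ := distinct_of_not_collinear hcol
  refine ⟨pr_main l₁ l₂ l₃ hcol, ?_⟩
  intro S hS
  obtain ⟨φ₀, hφ₀P, hφ₀S⟩ := Set.exists_of_ssubset hS
  have hsub := hS.subset
  simp only [P, Set.mem_insert_iff, Set.mem_singleton_iff] at hφ₀P
  rcases hφ₀P with rfl | rfl | rfl | rfl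
  · refine not_pr_three l₁ l₂ l₃ hcol S ?_
    intro φ hφ
    have h := hsub hφ
    simp only [P, Set.mem_insert_iff, Set.mem_singleton_iff] at h
    rcases h with h | h | h | h
    · exact absurd (h ▸ hφ) hφ₀S
    · simp [h]
    · simp [h]
    · simp [h]
  · refine not_pr_pair l₂ l₃ h23 S ?_
    intro φ hφ
    have h := hsub hφ
    simp only [P, Set.mem_insert_iff, Set.mem_singleton_iff] at h
    rcases h with h | h | h | h
    · simp [h]
    · exact absurd (h ▸ hφ) hφ₀S
    · simp [h]
    · simp [h]
  · refine not_pr_pair l₁ l₃ h13 S ?_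
    intro φ hφ
    have h := hsub hφ
    simp only [P, Set.mem_insert_iff, Set.mem_singleton_iff] at h
    rcases h with h | h | h | h
    · simp [h]
    · simp [h]
    · exact absurd (h ▸ hφ) hφ₀S
    · simp [h]
  · refine not_pr_pair l₁ l₂ h12 S ?_
    intro φ hφ
    have h := hsub hφ
    simp only [P, Set.mem_insert_iff, Set.mem_singleton_iff] at h
    rcases h with h | h | h | h
    · simp [h]
    · simp [h]
    · simp [h]
    · exact absurd (h ▸ hφ) hφ₀S
end
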